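/- Pgf of the sum on a χ-nary tree: let T be the χ-nary tree of radius ξ (rooted so that every non-leaf vertex has exactly χ children and every leaf is at distance ξ from the root), χ ≥ 1, ξ ≥ 1, let n = Σ_{i=0}^{ξ} χ^i be its number of vertices, let λ > 0, let α ∈ [0,1], and let N ~ MPMRF(λ, α, T) with α_e = α for every edge e. Define g_0(t) = t and g_{i+1}(t) = t(1 − α + α g_i(t))^χ. Then M = Σ_{v∈V} N_v has pgf E[t^M] = exp( λ(α + (1−α)n) · ( Σ_{i=0}^{ξ} [ χ^{ξ−i} (1−α)^{min(1, ξ−i)} / (α + (1−α)n) ] g_i(t) − 1 ) ) for t ∈ [−1,1]. -/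

import Mathlib

open MeasureTheory ProbabilityTheory
open scoped ProbabilityTheory

/-- The Poisson probability mass function with mean `lam`, evaluated at `k`. -/
noncomputable def poissonProb (lam : ℝ) (k : ℕ) : ℝ :=
  Real.exp (-lam) * lam ^ k / (Nat.factorial k)

/-- The MPMRF construction: a tree-structured Markov random field with Poisson(`lam`)
marginals, built on a tree `G` rooted at `root` via the stochastic representation
`N_root = L_root` and `N_v = α_{(pa v, v)} ∘ N_{pa v} + L_v` for `v ≠ root`, where `∘`
denotes binomial thinning (realized through the i.i.d. Bernoulli indicators `I v i`),
the innovations `L_v` are Poisson, and all innovations and indicator sequences are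
mutually independent. -/
structure MPMRF {V : Type} [Fintype V] [DecidableEq V]
    (G : SimpleGraph V) (lam : ℝ) (alpha : Sym2 V → ℝ)
    (Ω : Type) [MeasureSpace Ω] : Type where
  /-- the underlying graph is a tree -/
  isTree : G.IsTree
  lam_pos : 0 < lam
  alpha_mem : ∀ e ∈ G.edgeSet, alpha e ∈ Set.Icc (0 : ℝ) 1
  /-- the chosen root -/
  root : V
  /-- the parent function of the rooted tree -/
  pa : V → V
  pa_adj : ∀ v, v ≠ root → G.Adj (pa v) v
  pa_dist : ∀ v, v ≠ root → G.dist root (pa v) + 1 = G.dist root v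
  /-- innovation random variables -/
  L : V → Ω → ℕ
  /-- Bernoulli indicators used in the binomial thinnings -/
  I : V → ℕ → Ω → ℕ
  /-- the components of the Markov random field -/
  N : V → Ω → ℕ
  meas_L : ∀ v, Measurable (L v)
  meas_I : ∀ v i, Measurable (I v i)
  meas_N : ∀ v, Measurable (N v)
  I_le_one : ∀ v i ω, I v i ω ≤ 1
  I_bern : ∀ v, v ≠ root → ∀ i,
    ℙ {ω | I v i ω = 1} = ENNReal.ofReal (alpha s(pa v, v))
  L_root_poisson : ∀ k, ℙ {ω | L root ω = k} = ENNReal.ofReal (poissonProb lam k)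
  L_poisson : ∀ v, v ≠ root → ∀ k,
    ℙ {ω | L v ω = k} =
      ENNReal.ofReal (poissonProb (lam * (1 - alpha s(pa v, v))) k)
  /-- the innovations and all indicator variables are mutually independent -/
  indep : iIndepFun
    (Sum.elim L (fun p : V × ℕ => I p.1 p.2)) ℙ
  N_root : N root = L root
  N_rec : ∀ v, v ≠ root → ∀ ω,
    N v ω = (∑ i ∈ Finset.range (N (pa v) ω), I v i ω) + L v ω

/-- `gwSum a χ i` is the pgf of the sum of generations `0` through `i` of a
Galton–Watson process with Binomial(`χ`, `a`) offspring distribution: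
`g_0(t) = t` and `g_{i+1}(t) = t (1 − a + a g_i(t))^χ`. -/
noncomputable def gwSum (a : ℝ) (χ : ℕ) : ℕ → ℝ → ℝ
  | 0, t => t
  | (i + 1), t => t * (1 - a + a * gwSum a χ i t) ^ χ

/-!
The tree is peeled level by level, from the leaves up. Conditionally on the noise of the vertices
of depth `≤ j`, each `N_c` on level `j + 1` is `α ∘ N_{pa c} + L_c` built from fresh noise, so
inside an expectation `x ^ N_c` may be replaced by `(1 - α + α x) ^ N_{pa c} · e^{λ(1-α)(x-1)}`
(freezing lemma). As every vertex of level `j` has `χ` children, weight `x` on level `j + 1`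
thus becomes weight `t (1 - α + α x) ^ χ` on level `j`, at the cost of a factor
`exp (χ ^ (j + 1) λ (1 - α) (x - 1))`. Starting from weight `t = g_0(t)` on the leaves, level
`ξ - i` ends up with weight `g_i(t)`, and the root contributes the Poisson(`λ`) pgf at `g_ξ(t)`.
-/

open MeasureTheory ProbabilityTheory Finset

lemma abs_one_sub_add_mul_le_one {a x : ℝ} (ha : a ∈ Set.Icc (0 : ℝ) 1) (hx : |x| ≤ 1) :
    |1 - a + a * x| ≤ 1 := by
  obtain ⟨ha₀, ha₁⟩ := ha
  rw [abs_le] at hx ⊢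
  constructor <;> nlinarith

lemma abs_pow_le_one {x : ℝ} (hx : |x| ≤ 1) (n : ℕ) : |x ^ n| ≤ 1 := by
  rw [abs_pow]
  exact pow_le_one₀ (abs_nonneg x) hx

lemma abs_gwSum_le_one {a t : ℝ} (ha : a ∈ Set.Icc (0 : ℝ) 1) (χ : ℕ) (ht : |t| ≤ 1) :
    ∀ i, |gwSum a χ i t| ≤ 1
  | 0 => ht
  | i + 1 => by
    rw [gwSum, abs_mul]
    exact mul_le_one₀ ht (abs_nonneg _)
      (abs_pow_le_one (abs_one_sub_add_mul_le_one ha (abs_gwSum_le_one ha χ ht i)) χ)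

section Freezing

variable {Ω : Type*}

lemma measurable_apply_of_countable {κ : Type*} [MeasurableSpace κ] [Countable κ]
    [MeasurableSingletonClass κ] {β : Type*} [MeasurableSpace β] {m : MeasurableSpace Ω}
    {Z : Ω → κ} (hZ : Measurable[m] Z) {H : κ → Ω → β} (hH : ∀ k, Measurable[m] (H k)) :
    Measurable[m] fun ω => H (Z ω) ω :=
  (measurable_from_prod_countable_left (f := fun p : Ω × κ => H p.2 p.1) hH).comp
    (measurable_id.prodMk hZ)

lemma integral_eq_tsum_setIntegral_fiber [MeasurableSpace Ω] {μ : Measure Ω} {κ : Type*}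
    [Countable κ] {Z : Ω → κ} (hZ : ∀ k, MeasurableSet {ω | Z ω = k}) {f : Ω → ℝ}
    (hf : Integrable f μ) :
    ∫ ω, f ω ∂μ = ∑' k, ∫ ω in {ω | Z ω = k}, f ω ∂μ := by
  have hcover : (⋃ k, {ω | Z ω = k}) = Set.univ := Set.iUnion_eq_univ_iff.2 fun ω => ⟨Z ω, rfl⟩
  have hdisj : Pairwise (Function.onFun Disjoint fun k => {ω | Z ω = k}) :=
    fun k l hkl => Set.disjoint_left.2 fun ω hk hl => hkl (hk.symm.trans hl)
  rw [← integral_iUnion hZ hdisj (hcover ▸ hf.integrableOn), hcover, setIntegral_univ]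

/-- The freezing lemma, for an index `Z` taking countably many values. -/
lemma integral_mul_apply_eq_of_indep {m₁ m₂ mΩ : MeasurableSpace Ω} {μ : Measure Ω}
    [IsProbabilityMeasure μ] (hm₁ : m₁ ≤ mΩ) (hm₂ : m₂ ≤ mΩ) (hind : Indep m₁ m₂ μ)
    {κ : Type*} [MeasurableSpace κ] [Countable κ] [MeasurableSingletonClass κ]
    {Z : Ω → κ} (hZ : Measurable[m₁] Z) {F : Ω → ℝ} (hF : Measurable[m₁] F)
    (hFi : Integrable F μ) {H : κ → Ω → ℝ} (hH : ∀ k, Measurable[m₂] (H k)) {C : ℝ}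
    (hHC : ∀ k ω, |H k ω| ≤ C) :
    ∫ ω, F ω * H (Z ω) ω ∂μ = ∫ ω, F ω * ∫ ω', H (Z ω) ω' ∂μ ∂μ := by
  have hfib : ∀ k, MeasurableSet {ω | Z ω = k} := fun k => hm₁ _ (hZ (measurableSet_singleton k))
  have hHZ : Measurable fun ω => H (Z ω) ω :=
    measurable_apply_of_countable (hZ.mono hm₁ le_rfl) fun k => (hH k).mono hm₂ le_rfl
  have hhZ : Measurable fun ω => ∫ ω', H (Z ω) ω' ∂μ :=
    (measurable_of_countable fun k => ∫ ω', H k ω' ∂μ).comp (hZ.mono hm₁ le_rfl)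
  have hbound : ∀ k, ‖∫ ω', H k ω' ∂μ‖ ≤ C := fun k => by
    simpa using norm_integral_le_of_norm_le_const (μ := μ)
      (ae_of_all _ fun ω => (Real.norm_eq_abs _).trans_le (hHC k ω))
  have hfiber : ∀ k, ∫ ω in {ω | Z ω = k}, F ω * H (Z ω) ω ∂μ
      = ∫ ω in {ω | Z ω = k}, F ω * ∫ ω', H (Z ω) ω' ∂μ ∂μ := by
    intro k
    have hFk : Measurable[m₁] ({ω | Z ω = k}.indicator F) :=
      hF.indicator (hZ (measurableSet_singleton k))
    have hindep : IndepFun ({ω | Z ω = k}.indicator F) (H k) μ :=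
      (IndepFun_iff_Indep _ _ _).2 <| indep_of_indep_of_le_right
        (indep_of_indep_of_le_left hind hFk.comap_le) (hH k).comap_le
    calc ∫ ω in {ω | Z ω = k}, F ω * H (Z ω) ω ∂μ
        = ∫ ω, {ω | Z ω = k}.indicator F ω * H k ω ∂μ := by
          rw [← integral_indicator (hfib k)]
          congr 1 with ω
          by_cases hω : Z ω = k <;> simp [Set.indicator, hω]
      _ = (∫ ω in {ω | Z ω = k}, F ω ∂μ) * ∫ ω', H k ω' ∂μ := by
          rw [hindep.integral_fun_mul_eq_mul_integral (hFk.mono hm₁ le_rfl).aestronglyMeasurable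
            ((hH k).mono hm₂ le_rfl).aestronglyMeasurable, integral_indicator (hfib k)]
      _ = ∫ ω in {ω | Z ω = k}, F ω * ∫ ω', H (Z ω) ω' ∂μ ∂μ := by
          rw [← integral_mul_const]
          exact setIntegral_congr_fun (hfib k) fun ω hω => by rw [show Z ω = k from hω]
  rw [integral_eq_tsum_setIntegral_fiber hfib (hFi.mul_bdd hHZ.aestronglyMeasurable
      (ae_of_all _ fun ω => (Real.norm_eq_abs _).trans_le (hHC _ ω))),
    integral_eq_tsum_setIntegral_fiber hfib
      (hFi.mul_bdd hhZ.aestronglyMeasurable (ae_of_all _ fun ω => hbound (Z ω))),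
    tsum_congr hfiber]

end Freezing

section Pgf

variable {Ω : Type*} [MeasurableSpace Ω] {μ : Measure Ω}

lemma integral_pow_of_bernoulli [IsProbabilityMeasure μ] {X : Ω → ℕ} (hX : Measurable X)
    (hX₁ : ∀ ω, X ω ≤ 1) {p : ℝ} (hp : 0 ≤ p) (hlaw : μ {ω | X ω = 1} = ENNReal.ofReal p)
    (x : ℝ) :
    ∫ ω, x ^ X ω ∂μ = 1 - p + p * x := by
  have hA : MeasurableSet {ω | X ω = 1} := hX (measurableSet_singleton 1)
  have hpow : (fun ω => x ^ X ω) = fun ω => {ω | X ω = 1}.indicator (fun _ => x - 1) ω + 1 := by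
    funext ω
    rcases Nat.le_one_iff_eq_zero_or_eq_one.1 (hX₁ ω) with h | h <;> simp [h]
  rw [hpow, integral_add ((integrable_const _).indicator hA) (integrable_const 1),
    integral_indicator_const _ hA, measureReal_def, hlaw, ENNReal.toReal_ofReal hp]
  simp only [smul_eq_mul, integral_const, probReal_univ]
  ring

lemma integral_pow_of_poisson [IsProbabilityMeasure μ] {X : Ω → ℕ} (hX : Measurable X) {r : ℝ}
    (hr : 0 ≤ r) (hlaw : ∀ k, μ {ω | X ω = k} = ENNReal.ofReal (poissonProb r k)) (x : ℝ) :
    ∫ ω, x ^ X ω ∂μ = Real.exp (r * (x - 1)) := by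
  have hmap : μ.map X = poissonMeasure r.toNNReal := Measure.ext_of_singleton fun k => by
    rw [Measure.map_apply hX (measurableSet_singleton k), poissonMeasure_singleton,
      Real.coe_toNNReal r hr]
    exact hlaw k
  have hexp : ∑' n : ℕ, (r * x) ^ n / n.factorial = Real.exp (r * x) := by
    rw [Real.exp_eq_exp_ℝ, NormedSpace.exp_eq_tsum_div]
  rw [← integral_map hX.aemeasurable (measurable_from_nat (f := (x ^ ·))).aestronglyMeasurable,
    hmap, integral_poissonMeasure]
  simp only [Real.coe_toNNReal r hr, smul_eq_mul]
  calc ∑' n : ℕ, Real.exp (-r) * r ^ n / n.factorial * x ^ n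
      = Real.exp (-r) * ∑' n : ℕ, (r * x) ^ n / n.factorial := by
        rw [← tsum_mul_left]
        congr 1 with n
        ring
    _ = Real.exp (r * (x - 1)) := by rw [hexp, ← Real.exp_add]; ring_nf

lemma ProbabilityTheory.IndepFun.integral_pow_add {X Y : Ω → ℕ} (h : IndepFun X Y μ)
    (hX : Measurable X) (hY : Measurable Y) (x : ℝ) :
    ∫ ω, x ^ (X ω + Y ω) ∂μ = (∫ ω, x ^ X ω ∂μ) * ∫ ω, x ^ Y ω ∂μ := by
  simp_rw [pow_add]
  exact (h.comp measurable_from_nat measurable_from_nat).integral_fun_mul_eq_mul_integral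
    (by fun_prop) (by fun_prop)

lemma ProbabilityTheory.iIndepFun.integral_pow_sum [IsProbabilityMeasure μ] {ι : Type*}
    {X : ι → Ω → ℕ} (h : iIndepFun X μ) (hX : ∀ i, Measurable (X i)) (s : Finset ι) (x : ℝ) :
    ∫ ω, x ^ (∑ i ∈ s, X i ω) ∂μ = ∏ i ∈ s, ∫ ω, x ^ X i ω ∂μ := by
  classical
  induction s using Finset.induction_on with
  | empty => simp
  | insert i s hi ih =>
    have hindep : IndepFun (fun ω => ∑ j ∈ s, X j ω) (X i) μ := by
      simpa only [← Finset.sum_apply] using h.indepFun_finsetSum_of_notMem hX hi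
    simp_rw [sum_insert hi, prod_insert hi, add_comm (X i _)]
    rw [hindep.integral_pow_add (Finset.measurable_sum s fun j _ => hX j) (hX i), ih, mul_comm]

end Pgf

namespace MPMRF

variable {V : Type} [Fintype V] [DecidableEq V] {G : SimpleGraph V} {lam : ℝ}
  {alpha : Sym2 V → ℝ} {Ω : Type} [MeasureSpace Ω] (M : MPMRF G lam alpha Ω)

noncomputable def depth (v : V) : ℕ := G.dist M.root v

noncomputable def level (d : ℕ) : Finset V := univ.filter fun v => M.depth v = d

def children (v : V) : Finset V := univ.filter fun w => w ≠ M.root ∧ M.pa w = v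

lemma depth_pa {v : V} (hv : v ≠ M.root) : M.depth (M.pa v) + 1 = M.depth v := M.pa_dist v hv

lemma depth_eq_zero_iff {v : V} : M.depth v = 0 ↔ v = M.root := by
  rw [depth, M.isTree.connected.dist_eq_zero_iff, eq_comm]

lemma level_zero : M.level 0 = {M.root} := by
  ext v
  simp [level, M.depth_eq_zero_iff]

lemma mem_level_succ {j : ℕ} {c : V} :
    c ∈ M.level (j + 1) ↔ c ≠ M.root ∧ M.pa c ∈ M.level j := by
  simp only [level, mem_filter, mem_univ, true_and]
  constructor
  · intro hc
    have hr : c ≠ M.root := fun h => by simp [h, (M.depth_eq_zero_iff).2 rfl] at hc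
    exact ⟨hr, by have := M.depth_pa hr; omega⟩
  · rintro ⟨hr, hpa⟩
    rw [← M.depth_pa hr, hpa]

lemma filter_level_succ_pa_eq_children {j : ℕ} {v : V} (hv : v ∈ M.level j) :
    (M.level (j + 1)).filter (fun c => M.pa c = v) = M.children v := by
  ext c
  simp only [mem_filter, M.mem_level_succ, children, mem_univ, true_and]
  constructor
  · rintro ⟨⟨hr, -⟩, hpa⟩
    exact ⟨hr, hpa⟩
  · rintro ⟨hr, hpa⟩
    exact ⟨⟨hr, hpa ▸ hv⟩, hpa⟩

lemma prod_level_succ_pa {R : Type*} [CommMonoid R] (f : V → R) (j : ℕ) :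
    ∏ c ∈ M.level (j + 1), f (M.pa c) = ∏ v ∈ M.level j, f v ^ (M.children v).card := by
  rw [← prod_fiberwise_of_maps_to (fun c hc => (M.mem_level_succ.1 hc).2)]
  refine prod_congr rfl fun v hv => ?_
  rw [prod_congr rfl fun c hc => by rw [(mem_filter.1 hc).2], prod_const,
    M.filter_level_succ_pa_eq_children hv]

lemma card_level {χ ξ : ℕ} (hchildren : ∀ v, M.depth v < ξ → (M.children v).card = χ) :
    ∀ j ≤ ξ, (M.level j).card = χ ^ j
  | 0, _ => by simp [level_zero]
  | j + 1, hj => by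
    rw [card_eq_sum_card_fiberwise fun c hc => (M.mem_level_succ.1 hc).2,
      sum_congr rfl fun v hv => by
        rw [M.filter_level_succ_pa_eq_children hv, hchildren v (by simp [level] at hv; omega)],
      sum_const, card_level hchildren j (by omega), smul_eq_mul, pow_succ]

/-- With `x = g_{ξ-j}(t)`, the weight on level `j` accounts for the subtrees below it. -/
noncomputable def levelProd (t x : ℝ) (j : ℕ) (ω : Ω) : ℝ :=
  (∏ d ∈ range j, ∏ v ∈ M.level d, t ^ M.N v ω) * ∏ v ∈ M.level j, x ^ M.N v ω

lemma pow_sum_N_eq_levelProd {ξ : ℕ} (hdepth : ∀ v, M.depth v ≤ ξ) (t : ℝ) (ω : Ω) :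
    t ^ (∑ v, M.N v ω) = M.levelProd t t ξ ω := by
  rw [levelProd, ← prod_range_succ (fun d => ∏ v ∈ M.level d, t ^ M.N v ω),
    ← prod_pow_eq_pow_sum]
  exact (prod_fiberwise_of_maps_to (fun v _ => mem_range.2 (Nat.lt_succ_of_le (hdepth v))) _).symm

def noise : V ⊕ V × ℕ → Ω → ℕ := Sum.elim M.L fun p => M.I p.1 p.2

def noiseOwner : V ⊕ V × ℕ → V := Sum.elim id Prod.fst

abbrev sigmaOf (A : Set V) : MeasurableSpace Ω :=
  ⨆ x ∈ noiseOwner ⁻¹' A, MeasurableSpace.comap (M.noise x) inferInstance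

lemma measurable_noise (x : V ⊕ V × ℕ) : Measurable (M.noise x) := by
  cases x with
  | inl v => exact M.meas_L v
  | inr p => exact M.meas_I p.1 p.2

lemma sigmaOf_le (A : Set V) : M.sigmaOf A ≤ ‹MeasureSpace Ω›.toMeasurableSpace :=
  iSup₂_le fun x _ => (M.measurable_noise x).comap_le

lemma sigmaOf_mono {A B : Set V} (h : A ⊆ B) : M.sigmaOf A ≤ M.sigmaOf B :=
  biSup_mono fun _ hx => h hx

lemma indep_sigmaOf [IsProbabilityMeasure (ℙ : Measure Ω)] {A B : Set V} (h : Disjoint A B) :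
    Indep (M.sigmaOf A) (M.sigmaOf B) ℙ :=
  indep_iSup_of_disjoint (fun x => (M.measurable_noise x).comap_le) M.indep.iIndep
    (h.preimage noiseOwner)

lemma measurable_noise_sigmaOf {A : Set V} {x : V ⊕ V × ℕ} (hx : noiseOwner x ∈ A) :
    Measurable[M.sigmaOf A] (M.noise x) :=
  measurable_iff_comap_le.2 <| le_iSup₂ (f := fun x (_ : x ∈ noiseOwner ⁻¹' A) =>
    MeasurableSpace.comap (M.noise x) inferInstance) x hx

lemma measurable_L_sigmaOf {A : Set V} {v : V} (hv : v ∈ A) : Measurable[M.sigmaOf A] (M.L v) :=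
  M.measurable_noise_sigmaOf (x := .inl v) hv

lemma measurable_I_sigmaOf {A : Set V} {v : V} (hv : v ∈ A) (i : ℕ) :
    Measurable[M.sigmaOf A] (M.I v i) :=
  M.measurable_noise_sigmaOf (x := .inr (v, i)) hv

lemma measurable_N_sigmaOf {A : Set V} (hA : ∀ w ∈ A, w ≠ M.root → M.pa w ∈ A) {v : V}
    (hv : v ∈ A) : Measurable[M.sigmaOf A] (M.N v) := by
  induction hd : M.depth v using Nat.strong_induction_on generalizing v with
  | _ d ih =>
    by_cases hr : v = M.root
    · subst hr
      rw [M.N_root]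
      exact M.measurable_L_sigmaOf hv
    · have hpa := ih _ (by rw [← hd, ← M.depth_pa hr]; omega) (hA v hv hr) rfl
      rw [funext (M.N_rec v hr)]
      exact (measurable_apply_of_countable hpa (H := fun k ω => ∑ i ∈ range k, M.I v i ω)
        fun k => Finset.measurable_sum _ fun i _ => M.measurable_I_sigmaOf hv i).add
        (M.measurable_L_sigmaOf hv)

lemma alpha_pa_mem {c : V} (hc : c ≠ M.root) : alpha s(M.pa c, c) ∈ Set.Icc (0 : ℝ) 1 :=
  M.alpha_mem _ (M.pa_adj c hc)

variable [IsProbabilityMeasure (ℙ : Measure Ω)]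

lemma integral_pow_L_root (x : ℝ) : ∫ ω, x ^ M.L M.root ω = Real.exp (lam * (x - 1)) :=
  integral_pow_of_poisson (M.meas_L _) M.lam_pos.le M.L_root_poisson x

lemma integral_pow_L {c : V} (hc : c ≠ M.root) (x : ℝ) :
    ∫ ω, x ^ M.L c ω = Real.exp (lam * (1 - alpha s(M.pa c, c)) * (x - 1)) :=
  integral_pow_of_poisson (M.meas_L c)
    (mul_nonneg M.lam_pos.le (sub_nonneg.2 (M.alpha_pa_mem hc).2)) (M.L_poisson c hc) x

lemma integral_pow_I {c : V} (hc : c ≠ M.root) (i : ℕ) (x : ℝ) :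
    ∫ ω, x ^ M.I c i ω = 1 - alpha s(M.pa c, c) + alpha s(M.pa c, c) * x :=
  integral_pow_of_bernoulli (M.meas_I c i) (M.I_le_one c i) (M.alpha_pa_mem hc).1
    (M.I_bern c hc i) x

lemma integral_pow_thinning_add {c : V} (hc : c ≠ M.root) (k : ℕ) (x : ℝ) :
    ∫ ω, x ^ (∑ i ∈ range k, M.I c i ω + M.L c ω)
      = (1 - alpha s(M.pa c, c) + alpha s(M.pa c, c) * x) ^ k
        * Real.exp (lam * (1 - alpha s(M.pa c, c)) * (x - 1)) := by
  have hinj : Set.InjOn (fun i => (Sum.inr (c, i) : V ⊕ V × ℕ)) (range k) := by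
    intro i _ j _ h
    simpa using h
  have hnotMem : (Sum.inl c : V ⊕ V × ℕ) ∉ (range k).image fun i => Sum.inr (c, i) := by simp
  have hsum : ∀ ω, ∑ i ∈ range k, M.I c i ω + M.L c ω
      = ∑ x ∈ insert (Sum.inl c) ((range k).image fun i => Sum.inr (c, i)), M.noise x ω := by
    intro ω
    rw [sum_insert hnotMem, sum_image hinj, add_comm]
    rfl
  simp_rw [hsum]
  rw [iIndepFun.integral_pow_sum (X := M.noise) M.indep M.measurable_noise, prod_insert hnotMem,
    prod_image hinj, mul_comm]
  simp only [noise, Sum.elim_inl, Sum.elim_inr, M.integral_pow_L hc, M.integral_pow_I hc,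
    prod_const, card_range]

theorem integral_mul_pow_N {A : Set V} (hA : ∀ w ∈ A, w ≠ M.root → M.pa w ∈ A) {c : V}
    (hc : c ≠ M.root) (hcA : c ∉ A) (hpa : M.pa c ∈ A) {F : Ω → ℝ}
    (hF : Measurable[M.sigmaOf A] F) (hFi : Integrable F) {x : ℝ} (hx : |x| ≤ 1) :
    ∫ ω, F ω * x ^ M.N c ω
      = Real.exp (lam * (1 - alpha s(M.pa c, c)) * (x - 1))
        * ∫ ω, F ω * (1 - alpha s(M.pa c, c) + alpha s(M.pa c, c) * x) ^ M.N (M.pa c) ω := by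
  set H : ℕ → Ω → ℝ := fun k ω => x ^ (∑ i ∈ range k, M.I c i ω + M.L c ω)
  have hH : ∀ k, Measurable[M.sigmaOf {c}] (H k) := by
    intro k
    have hI : ∀ i, Measurable[M.sigmaOf {c}] (M.I c i) := M.measurable_I_sigmaOf rfl
    have hL : Measurable[M.sigmaOf {c}] (M.L c) := M.measurable_L_sigmaOf rfl
    fun_prop
  have hfreeze := integral_mul_apply_eq_of_indep (M.sigmaOf_le A) (M.sigmaOf_le {c})
    (M.indep_sigmaOf (Set.disjoint_singleton_right.2 hcA)) (M.measurable_N_sigmaOf hA hpa) hF hFi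
    hH (fun k ω => abs_pow_le_one hx _)
  simp only [H, ← M.N_rec c hc, M.integral_pow_thinning_add hc] at hfreeze
  rw [hfreeze, ← integral_const_mul]
  congr 1 with ω
  ring

theorem integral_mul_prod_pow_N {A : Set V} (hA : ∀ w ∈ A, w ≠ M.root → M.pa w ∈ A)
    {C : Finset V} (hC : ∀ c ∈ C, c ≠ M.root ∧ c ∉ A ∧ M.pa c ∈ A) {F : Ω → ℝ}
    (hF : Measurable[M.sigmaOf A] F) (hFi : Integrable F) {x : ℝ} (hx : |x| ≤ 1) :
    ∫ ω, F ω * ∏ c ∈ C, x ^ M.N c ω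
      = (∏ c ∈ C, Real.exp (lam * (1 - alpha s(M.pa c, c)) * (x - 1)))
        * ∫ ω, F ω * ∏ c ∈ C,
            (1 - alpha s(M.pa c, c) + alpha s(M.pa c, c) * x) ^ M.N (M.pa c) ω := by
  induction C using Finset.induction_on generalizing F with
  | empty => simp
  | insert c₀ C hc₀ ih =>
    obtain ⟨hr₀, hc₀A, hpa₀⟩ := hC c₀ (mem_insert_self c₀ C)
    have hC' : ∀ c ∈ C, c ≠ M.root ∧ c ∉ A ∧ M.pa c ∈ A := fun c hc => hC c (mem_insert_of_mem hc)
    set u₀ : ℝ := 1 - alpha s(M.pa c₀, c₀) + alpha s(M.pa c₀, c₀) * x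
    have hA' : ∀ w ∈ A ∪ C, w ≠ M.root → M.pa w ∈ A ∪ C := by
      rintro w (hw | hw) hr
      · exact Or.inl (hA w hw hr)
      · exact Or.inl (hC' w hw).2.2
    have hFC : Measurable[M.sigmaOf (A ∪ C)] fun ω => F ω * ∏ c ∈ C, x ^ M.N c ω :=
      (hF.mono (M.sigmaOf_mono Set.subset_union_left) le_rfl).mul <|
        Finset.measurable_prod _ fun c hc => measurable_from_nat.comp
          (M.measurable_N_sigmaOf hA' (Or.inr hc))
    have hFCi : Integrable (fun ω => F ω * ∏ c ∈ C, x ^ M.N c ω) :=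
      hFi.mul_bdd (Finset.measurable_prod _ fun c _ => measurable_from_nat.comp
        (M.meas_N c)).aestronglyMeasurable (ae_of_all _ fun ω => by
          rw [Real.norm_eq_abs, prod_pow_eq_pow_sum]; exact abs_pow_le_one hx _)
    have hFu : Measurable[M.sigmaOf A] fun ω => F ω * u₀ ^ M.N (M.pa c₀) ω :=
      hF.mul (measurable_from_nat.comp (M.measurable_N_sigmaOf hA hpa₀))
    have hFui : Integrable (fun ω => F ω * u₀ ^ M.N (M.pa c₀) ω) :=
      hFi.mul_bdd (measurable_from_nat.comp (M.meas_N _)).aestronglyMeasurable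
        (ae_of_all _ fun ω => by
          rw [Real.norm_eq_abs]
          exact abs_pow_le_one (abs_one_sub_add_mul_le_one (M.alpha_pa_mem hr₀) hx) _)
    calc ∫ ω, F ω * ∏ c ∈ insert c₀ C, x ^ M.N c ω
        = ∫ ω, (F ω * ∏ c ∈ C, x ^ M.N c ω) * x ^ M.N c₀ ω := by
          simp_rw [prod_insert hc₀]
          congr 1 with ω
          ring
      _ = Real.exp (lam * (1 - alpha s(M.pa c₀, c₀)) * (x - 1))
            * ∫ ω, (F ω * u₀ ^ M.N (M.pa c₀) ω) * ∏ c ∈ C, x ^ M.N c ω := by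
          rw [M.integral_mul_pow_N hA' hr₀ (by simp [hc₀A, hc₀]) (Or.inl hpa₀) hFC hFCi hx]
          congr 1
          congr 1 with ω
          ring
      _ = _ := by
          rw [ih hC' hFu hFui]
          simp_rw [prod_insert hc₀, mul_assoc]
          rfl

theorem integral_levelProd_succ {a : ℝ} (halpha : ∀ e ∈ G.edgeSet, alpha e = a) {χ ξ : ℕ}
    (hchildren : ∀ v, M.depth v < ξ → (M.children v).card = χ) {j : ℕ} (hj : j < ξ)
    {t x : ℝ} (ht : |t| ≤ 1) (hx : |x| ≤ 1) :
    ∫ ω, M.levelProd t x (j + 1) ω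
      = Real.exp ((χ : ℝ) ^ (j + 1) * (lam * (1 - a) * (x - 1)))
        * ∫ ω, M.levelProd t (t * (1 - a + a * x) ^ χ) j ω := by
  set A : Set V := {v | M.depth v ≤ j}
  have hA : ∀ w ∈ A, w ≠ M.root → M.pa w ∈ A := fun w hw hr => by
    have := M.depth_pa hr
    simp only [A, Set.mem_ofPred_eq] at hw ⊢
    omega
  have hC : ∀ c ∈ M.level (j + 1), c ≠ M.root ∧ c ∉ A ∧ M.pa c ∈ A := fun c hc => by
    obtain ⟨hr, hpa⟩ := M.mem_level_succ.1 hc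
    simp only [level, mem_filter, mem_univ, true_and] at hc hpa
    simp only [A, Set.mem_ofPred_eq]
    exact ⟨hr, by omega, hpa.le⟩
  have hα : ∀ c ∈ M.level (j + 1), alpha s(M.pa c, c) = a := fun c hc =>
    halpha _ (M.pa_adj c (M.mem_level_succ.1 hc).1)
  set F : Ω → ℝ := fun ω => ∏ d ∈ range (j + 1), ∏ v ∈ M.level d, t ^ M.N v ω
  have hF : Measurable[M.sigmaOf A] F := Finset.measurable_prod _ fun d hd =>
    Finset.measurable_prod _ fun v hv => measurable_from_nat.comp <| M.measurable_N_sigmaOf hA <| by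
      simp only [level, mem_filter, mem_univ, true_and, mem_range] at hd hv
      simp only [A, Set.mem_ofPred_eq]
      omega
  have hFi : Integrable F :=
    Integrable.of_bound (hF.mono (M.sigmaOf_le A) le_rfl).aestronglyMeasurable 1 <|
      ae_of_all _ fun ω => by
        simp only [F, Real.norm_eq_abs, prod_pow_eq_pow_sum]
        exact abs_pow_le_one ht _
  calc ∫ ω, M.levelProd t x (j + 1) ω = ∫ ω, F ω * ∏ c ∈ M.level (j + 1), x ^ M.N c ω := rfl
    _ = (∏ c ∈ M.level (j + 1), Real.exp (lam * (1 - a) * (x - 1)))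
          * ∫ ω, F ω * ∏ c ∈ M.level (j + 1), (1 - a + a * x) ^ M.N (M.pa c) ω := by
        rw [M.integral_mul_prod_pow_N hA hC hF hFi hx, prod_congr rfl fun c hc => by rw [hα c hc]]
        congr 2 with ω
        rw [prod_congr rfl fun c hc => by rw [hα c hc]]
    _ = _ := by
        rw [prod_const, M.card_level hchildren (j + 1) hj, ← Real.exp_nat_mul]
        push_cast
        congr 2 with ω
        rw [M.prod_level_succ_pa (fun v => (1 - a + a * x) ^ M.N v ω : V → ℝ)]
        simp only [F, levelProd, prod_range_succ, mul_assoc, ← prod_mul_distrib]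
        congr 1
        refine prod_congr rfl fun v hv => ?_
        rw [hchildren v (by simp only [level, mem_filter, mem_univ, true_and] at hv; omega),
          mul_pow, ← pow_mul, ← pow_mul, mul_comm χ]

theorem integral_levelProd_eq_exp_mul {a : ℝ} (ha : a ∈ Set.Icc (0 : ℝ) 1)
    (halpha : ∀ e ∈ G.edgeSet, alpha e = a) {χ ξ : ℕ}
    (hchildren : ∀ v, M.depth v < ξ → (M.children v).card = χ) {t : ℝ} (ht : |t| ≤ 1) :
    ∀ m ≤ ξ, ∫ ω, M.levelProd t t ξ ω
      = Real.exp (∑ i ∈ range m, (χ : ℝ) ^ (ξ - i) * (lam * (1 - a) * (gwSum a χ i t - 1)))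
        * ∫ ω, M.levelProd t (gwSum a χ m t) (ξ - m) ω
  | 0, _ => by simp [gwSum]
  | m + 1, hm => by
    have hξm : ξ - m = ξ - (m + 1) + 1 := by omega
    rw [integral_levelProd_eq_exp_mul ha halpha hchildren ht m (by omega), hξm,
      M.integral_levelProd_succ halpha hchildren (by omega) ht (abs_gwSum_le_one ha χ ht m),
      ← mul_assoc, ← Real.exp_add, sum_range_succ, ← hξm]
    rfl

theorem integral_pow_sum_N {a : ℝ} (ha : a ∈ Set.Icc (0 : ℝ) 1)
    (halpha : ∀ e ∈ G.edgeSet, alpha e = a) {χ ξ : ℕ} (hdepth : ∀ v, M.depth v ≤ ξ)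
    (hchildren : ∀ v, M.depth v < ξ → (M.children v).card = χ) {t : ℝ} (ht : |t| ≤ 1) :
    ∫ ω, t ^ (∑ v, M.N v ω)
      = Real.exp (∑ i ∈ range ξ, (χ : ℝ) ^ (ξ - i) * (lam * (1 - a) * (gwSum a χ i t - 1))
          + lam * (gwSum a χ ξ t - 1)) := by
  simp_rw [M.pow_sum_N_eq_levelProd hdepth t,
    M.integral_levelProd_eq_exp_mul ha halpha hchildren ht ξ le_rfl, Nat.sub_self, levelProd,
    range_zero, prod_empty, one_mul, level_zero, prod_singleton, M.N_root, M.integral_pow_L_root,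
    Real.exp_add]

end MPMRF

lemma tree_pgf_exponent_eq {lam a : ℝ} (ha : a ≤ 1) (χ ξ : ℕ) (g : ℕ → ℝ) :
    ∑ i ∈ range ξ, (χ : ℝ) ^ (ξ - i) * (lam * (1 - a) * (g i - 1)) + lam * (g ξ - 1)
      = lam * (a + (1 - a) * (∑ i ∈ range (ξ + 1), (χ : ℝ) ^ i))
          * ((∑ i ∈ range (ξ + 1),
                ((χ : ℝ) ^ (ξ - i) * (1 - a) ^ (min 1 (ξ - i))
                    / (a + (1 - a) * (∑ i ∈ range (ξ + 1), (χ : ℝ) ^ i)))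
                  * g i) - 1) := by
  set n := ∑ i ∈ range (ξ + 1), (χ : ℝ) ^ i
  have hn : n = ∑ i ∈ range ξ, (χ : ℝ) ^ (ξ - i) + 1 := by
    rw [← pow_zero (χ : ℝ), ← Nat.sub_self ξ, ← sum_range_succ (fun i => (χ : ℝ) ^ (ξ - i)),
      ← sum_range_reflect]
    exact sum_congr rfl fun i hi => by rw [mem_range] at hi; congr 1; omega
  clear_value n
  have hD : 0 < a + (1 - a) * n := by
    have : 0 ≤ ∑ i ∈ range ξ, (χ : ℝ) ^ (ξ - i) := sum_nonneg fun _ _ => by positivity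
    rw [hn]
    nlinarith
  have hweights : ∑ i ∈ range (ξ + 1),
      ((χ : ℝ) ^ (ξ - i) * (1 - a) ^ (min 1 (ξ - i)) / (a + (1 - a) * n)) * g i
        = ((1 - a) * ∑ i ∈ range ξ, (χ : ℝ) ^ (ξ - i) * g i + g ξ) / (a + (1 - a) * n) := by
    rw [sum_range_succ, Nat.sub_self, mul_sum, add_div, sum_div]
    congr 1
    · refine sum_congr rfl fun i hi => ?_
      rw [min_eq_left (by simp at hi; omega), pow_one]
      ring
    · simp [div_eq_inv_mul]
  have hterms : ∑ i ∈ range ξ, (χ : ℝ) ^ (ξ - i) * (lam * (1 - a) * (g i - 1))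
      = lam * (1 - a)
          * (∑ i ∈ range ξ, (χ : ℝ) ^ (ξ - i) * g i - ∑ i ∈ range ξ, (χ : ℝ) ^ (ξ - i)) := by
    rw [← sum_sub_distrib, mul_sum]
    exact sum_congr rfl fun i _ => by ring
  rw [hweights, hterms]
  field_simp
  rw [hn]
  ring

theorem mpmrf_chi_nary_sum_pgf_general {V : Type} [Fintype V] [DecidableEq V]
    (G : SimpleGraph V) (lam a : ℝ) (alpha : Sym2 V → ℝ)
    (Ω : Type) [MeasureSpace Ω] [IsProbabilityMeasure (ℙ : Measure Ω)]
    (M : MPMRF G lam alpha Ω)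
    (χ ξ : ℕ)
    (ha : a ∈ Set.Icc (0 : ℝ) 1)
    (halpha : ∀ e ∈ G.edgeSet, alpha e = a)
    (hdepth : ∀ v : V, G.dist M.root v ≤ ξ)
    (hchildren : ∀ v : V, G.dist M.root v < ξ →
      (Finset.univ.filter (fun j => j ≠ M.root ∧ M.pa j = v)).card = χ) :
    ∀ t ∈ Set.Icc (-1 : ℝ) 1,
      ∫ ω, (t : ℝ) ^ (∑ v : V, M.N v ω) ∂ℙ
        = Real.exp (lam * (a + (1 - a) * (∑ i ∈ Finset.range (ξ + 1), (χ : ℝ) ^ i))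
            * ((∑ i ∈ Finset.range (ξ + 1),
                  ((χ : ℝ) ^ (ξ - i) * (1 - a) ^ (min 1 (ξ - i))
                      / (a + (1 - a) * (∑ i ∈ Finset.range (ξ + 1), (χ : ℝ) ^ i)))
                    * gwSum a χ i t) - 1)) := by
  intro t ht
  rw [M.integral_pow_sum_N ha halpha hdepth hchildren (abs_le.2 ht),
    tree_pgf_exponent_eq ha.2]

/-- Pgf of the sum on a `χ`-nary tree of radius `ξ` (every vertex at
distance `< ξ` from the root has exactly `χ` children, every vertex at distance `ξ` is
a leaf) with common dependence parameter `a ∈ [0,1]` on every edge: with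
`n = Σ_{i=0}^{ξ} χ^i` the number of vertices,
`E[t^M] = exp(λ(a + (1−a)n)(Σ_{i=0}^{ξ} (χ^{ξ−i}(1−a)^{min(1,ξ−i)}/(a+(1−a)n)) g_i(t) − 1))`
for `t ∈ [−1,1]`. -/
theorem mpmrf_chi_nary_sum_pgf {V : Type} [Fintype V] [DecidableEq V]
    (G : SimpleGraph V) (lam a : ℝ) (alpha : Sym2 V → ℝ)
    (Ω : Type) [MeasureSpace Ω] [IsProbabilityMeasure (ℙ : Measure Ω)]
    (M : MPMRF G lam alpha Ω)
    (χ ξ : ℕ) (hχ : 1 ≤ χ) (hξ : 1 ≤ ξ)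
    (ha : a ∈ Set.Icc (0 : ℝ) 1)
    (halpha : ∀ e ∈ G.edgeSet, alpha e = a)
    (hdepth : ∀ v : V, G.dist M.root v ≤ ξ)
    (hchildren : ∀ v : V, G.dist M.root v < ξ →
      (Finset.univ.filter (fun j => j ≠ M.root ∧ M.pa j = v)).card = χ)
    (hleaves : ∀ v : V, G.dist M.root v = ξ →
      (Finset.univ.filter (fun j => j ≠ M.root ∧ M.pa j = v)).card = 0) :
    ∀ t ∈ Set.Icc (-1 : ℝ) 1,
      ∫ ω, (t : ℝ) ^ (∑ v : V, M.N v ω) ∂ℙ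
        = Real.exp (lam * (a + (1 - a) * (∑ i ∈ Finset.range (ξ + 1), (χ : ℝ) ^ i))
            * ((∑ i ∈ Finset.range (ξ + 1),
                  ((χ : ℝ) ^ (ξ - i) * (1 - a) ^ (min 1 (ξ - i))
                      / (a + (1 - a) * (∑ i ∈ Finset.range (ξ + 1), (χ : ℝ) ^ i)))
                    * gwSum a χ i t) - 1)) :=
  mpmrf_chi_nary_sum_pgf_general G lam a alpha Ω M χ ξ ha halpha hdepth hchildren
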